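/- arXiv:math/0703888 — 2 statements merged into one kernel-verified Lean document; each statement's English description precedes it below -/
import Mathlib

section
/- Let b > δ > 0 and let p be a real polynomial of degree at most n. Set k = (2δ/(b−δ))(1 + √(1 + (b−δ)/δ)). Then sup_{x∈[0,b−δ]} |p(x)| ≥ sup_{x∈[0,b]} |p(x)| · (1/(1+k))^n. -/
open Polynomial Real



lemma cheb_natDegree_le : ∀ n : ℕ, (Polynomial.Chebyshev.T ℝ (n : ℤ)).natDegree ≤ n := by
  intro n
  induction n using Nat.strong_induction_on with
  | _ n ih =>
    match n with
    | 0 => simp [Polynomial.Chebyshev.T_zero]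
    | 1 => simp [Polynomial.Chebyshev.T_one]
    | (m+2) =>
      have h1 := ih (m+1) (by omega)
      have h0 := ih m (by omega)
      rw [show ((m+2:ℕ) : ℤ) = (m : ℤ) + 2 by push_cast; ring,
        Polynomial.Chebyshev.T_add_two]
      refine le_trans (natDegree_sub_le _ _) ?_
      have : ((m:ℤ)+1) = ((m+1:ℕ):ℤ) := by push_cast; ring
      rw [this]
      refine max_le (le_trans (natDegree_mul_le) ?_) (by omega)
      have h2 : (2 * X : ℝ[X]).natDegree ≤ 1 :=
        le_trans natDegree_mul_le (by simp)
      omega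

lemma cheb_eval_eq : ∀ (n : ℕ) {x : ℝ}, 1 ≤ x →
    (Polynomial.Chebyshev.T ℝ (n : ℤ)).eval x
      = ((x + Real.sqrt (x^2 - 1))^n + ((x + Real.sqrt (x^2 - 1))⁻¹)^n) / 2 := by
  intro n
  induction n using Nat.strong_induction_on with
  | _ n ih =>
    intro x hx
    set s := Real.sqrt (x^2 - 1) with hs
    have hs0 : 0 ≤ s := Real.sqrt_nonneg _
    have hssq : s^2 = x^2 - 1 := Real.sq_sqrt (by nlinarith)
    have hu : (1:ℝ) ≤ x + s := by linarith
    have hu0 : (0:ℝ) < x + s := by linarith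
    have huv : (x + s) * (x + s)⁻¹ = 1 := mul_inv_cancel₀ (ne_of_gt hu0)
    have h2x : (x + s) + (x + s)⁻¹ = 2 * x := by
      have : (x + s) * ((x+s) + (x+s)⁻¹) = (x + s) * (2 * x) := by
        rw [mul_add, huv]; nlinarith
      exact mul_left_cancel₀ (ne_of_gt hu0) this
    match n with
    | 0 => simp [Polynomial.Chebyshev.T_zero]
    | 1 =>
      simp only [Polynomial.Chebyshev.T_one, Nat.cast_one, eval_X, pow_one]
      linarith
    | (m+2) =>
      have h1 := ih (m+1) (by omega) hx
      have h0 := ih m (by omega) hx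
      rw [show ((m+2:ℕ) : ℤ) = (m : ℤ) + 2 by push_cast; ring,
        Polynomial.Chebyshev.T_add_two]
      rw [show ((m:ℤ)+1) = ((m+1:ℕ):ℤ) by push_cast; ring] at *
      simp only [eval_sub, eval_mul, eval_X, eval_ofNat, h1, h0]
      rw [← hs] at *
      set u := x + s
      set v := (x+s)⁻¹
      show 2 * x * ((u ^ (m+1) + v ^ (m+1)) / 2) - (u ^ m + v ^ m) / 2
        = (u ^ (m + 2) + v ^ (m + 2)) / 2
      have expand : u ^ (m+1) = u * u ^ m := by ring
      linear_combination (-(u^(m+1)+v^(m+1))/2) * h2x + ((u^m+v^m)/2) * huv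


lemma cheb_bounds (n : ℕ) {x : ℝ} (hx : 1 ≤ x) :
    1 ≤ (Polynomial.Chebyshev.T ℝ (n : ℤ)).eval x ∧
    (Polynomial.Chebyshev.T ℝ (n : ℤ)).eval x ≤ (x + Real.sqrt (x^2 - 1))^n := by
  rw [cheb_eval_eq n hx]
  set s := Real.sqrt (x^2-1) with hs
  have hs0 : 0 ≤ s := Real.sqrt_nonneg _
  have hu : (1:ℝ) ≤ x + s := by linarith
  have hu0 : (0:ℝ) < x + s := by linarith
  have hun : 1 ≤ (x+s)^n := one_le_pow₀ hu
  have hvn : ((x+s)⁻¹)^n ≤ 1 := pow_le_one₀ (by positivity) (inv_le_one_of_one_le₀ hu)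
  have hvn0 : 0 < ((x+s)⁻¹)^n := by positivity
  have huvn : (x+s)^n * ((x+s)⁻¹)^n = 1 := by
    rw [← mul_pow, mul_inv_cancel₀ (ne_of_gt hu0), one_pow]
  constructor
  · nlinarith [mul_nonneg (sub_nonneg.2 hun) (sub_nonneg.2 hvn)]
  · linarith


lemma cheb_extremal (n : ℕ) (p : ℝ[X]) (hp : p.natDegree ≤ n) (M : ℝ)
    (hM : ∀ y ∈ Set.Icc (-1:ℝ) 1, |p.eval y| ≤ M) {x0 : ℝ} (hx0 : 1 < x0) :
    |p.eval x0| ≤ (Polynomial.Chebyshev.T ℝ (n : ℤ)).eval x0 * M := by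
  rcases Nat.eq_zero_or_pos n with rfl | hn
  · have hpc : p = C (p.coeff 0) := Polynomial.eq_C_of_natDegree_le_zero hp
    have h := hM 0 (by norm_num)
    rw [hpc] at h ⊢
    simpa [Polynomial.Chebyshev.T_zero] using h
  -- general case
  by_contra hcon
  push_neg at hcon
  set T := Polynomial.Chebyshev.T ℝ (n : ℤ) with hT
  have hM0 : 0 ≤ M := le_trans (abs_nonneg _) (hM 0 (by norm_num))
  have hT1 : 1 ≤ T.eval x0 := (cheb_bounds n hx0.le).1
  have hp0 : 0 < |p.eval x0| := lt_of_le_of_lt (by positivity) hcon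
  have hpne : p.eval x0 ≠ 0 := by simpa [abs_pos] using hp0
  set c : ℝ := T.eval x0 / p.eval x0 with hc
  have hcM : |c| * M < 1 := by
    rw [hc, abs_div, abs_of_nonneg (le_trans zero_le_one hT1)]
    rw [div_mul_eq_mul_div, div_lt_one hp0]
    exact hcon
  set q : ℝ[X] := T - C c * p with hq
  -- nodes
  set θ : ℕ → ℝ := fun j => ((n : ℝ) - j) * π / n with hθ
  set η : ℕ → ℝ := fun j => Real.cos (θ j) with hη
  have hnR : (0:ℝ) < n := by exact_mod_cast hn
  have hθmem : ∀ j ≤ n, θ j ∈ Set.Icc 0 π := by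
    intro j hj
    have hj' : (j:ℝ) ≤ n := by exact_mod_cast hj
    constructor
    · apply div_nonneg (mul_nonneg (by linarith) Real.pi_pos.le) hnR.le
    · rw [div_le_iff₀ hnR]
      nlinarith [Real.pi_pos]
  have hηmono : ∀ i j, i < j → j ≤ n → η i < η j := by
    intro i j hij hj
    have h1 := hθmem i (le_of_lt (lt_of_lt_of_le hij hj))
    have h2 := hθmem j hj
    refine Real.strictAntiOn_cos h2 h1 ?_
    have hji : (i:ℝ) < j := by exact_mod_cast hij
    rw [div_lt_div_iff_of_pos_right hnR]
    nlinarith [Real.pi_pos]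
  have hηIcc : ∀ j, η j ∈ Set.Icc (-1:ℝ) 1 := fun j => ⟨Real.neg_one_le_cos _, Real.cos_le_one _⟩
  set e : ℕ → ℝ := fun j => Real.cos (((n : ℝ) - j) * π) with he
  have hTeval : ∀ j, T.eval (η j) = e j := by
    intro j
    have h := Polynomial.Chebyshev.T_real_cos (θ j) (n : ℤ)
    rw [hT, hη]
    simp only [he]
    rw [h]
    congr 1
    have hne : (n:ℝ) ≠ 0 := ne_of_gt hnR
    rw [hθ]
    push_cast
    field_simp
  have habs_e : ∀ j ≤ n, |e j| = 1 := by
    intro j hj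
    have : ((n : ℝ) - j) * π = (((n : ℤ) - j : ℤ) : ℝ) * π := by push_cast; ring
    rw [he]
    simp only
    rw [this]
    exact Real.abs_cos_int_mul_pi _
  have he_alt : ∀ j, e (j + 1) = - e j := by
    intro j
    have : ((n : ℝ) - (j+1:ℕ)) * π = ((n : ℝ) - j) * π - π := by push_cast; ring
    simp only [he]
    rw [this, Real.cos_sub_pi]
  have hsign : ∀ j ≤ n, 0 < e j * q.eval (η j) := by
    intro j hj
    have hqe : q.eval (η j) = e j - c * p.eval (η j) := by
      rw [hq]; simp [hTeval j]
    have h1 : |c * p.eval (η j)| ≤ |c| * M := by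
      rw [abs_mul]
      exact mul_le_mul_of_nonneg_left (hM _ (hηIcc j)) (abs_nonneg c)
    have he2 : e j ^ 2 = 1 := by
      rw [← sq_abs, habs_e j hj]; norm_num
    have h2 : e j * (c * p.eval (η j)) ≤ |c| * M := by
      calc e j * (c * p.eval (η j)) ≤ |e j * (c * p.eval (η j))| := le_abs_self _
        _ = |e j| * |c * p.eval (η j)| := abs_mul _ _
        _ ≤ 1 * (|c| * M) := by
            rw [habs_e j hj, one_mul, one_mul] at *
            exact h1
        _ = |c| * M := one_mul _
    have : e j * q.eval (η j) = 1 - e j * (c * p.eval (η j)) := by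
      rw [hqe]; nlinarith [he2]
    rw [this]
    linarith
  have hopp : ∀ j < n, q.eval (η j) * q.eval (η (j+1)) < 0 := by
    intro j hj
    have s1 := hsign j (by omega)
    have s2 := hsign (j+1) (by omega)
    rw [he_alt j] at s2
    have he2 : e j ^ 2 = 1 := by
      rw [← sq_abs, habs_e j (by omega)]; norm_num
    nlinarith [mul_pos s1 s2]
  have hcontq : ∀ a b : ℝ, ContinuousOn (fun x => q.eval x) (Set.Icc a b) :=
    fun a b => (Polynomial.continuous q).continuousOn
  have hex : ∀ j : Fin n, ∃ r, r ∈ Set.Ioo (η j) (η (j+1)) ∧ q.eval r = 0 := by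
    intro j
    have hop := hopp j j.2
    have hle : η j ≤ η ((j:ℕ)+1) := (hηmono j ((j:ℕ)+1) (by omega) (by omega)).le
    rcases lt_trichotomy (q.eval (η j)) 0 with hneg | hz | hpos
    · have hpos2 : 0 < q.eval (η ((j:ℕ)+1)) := by nlinarith
      have := intermediate_value_Ioo hle (hcontq _ _)
        (show (0:ℝ) ∈ Set.Ioo (q.eval (η j)) (q.eval (η ((j:ℕ)+1))) from ⟨hneg, hpos2⟩)
      obtain ⟨r, hr, hr0⟩ := this
      exact ⟨r, hr, hr0⟩
    · exfalso; rw [hz] at hop; simp at hop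
    · have hneg2 : q.eval (η ((j:ℕ)+1)) < 0 := by nlinarith
      have := intermediate_value_Ioo' hle (hcontq _ _)
        (show (0:ℝ) ∈ Set.Ioo (q.eval (η ((j:ℕ)+1))) (q.eval (η j)) from ⟨hneg2, hpos⟩)
      obtain ⟨r, hr, hr0⟩ := this
      exact ⟨r, hr, hr0⟩
  choose r hrIoo hrzero using hex
  have hηn : η n = 1 := by
    have : θ n = 0 := by rw [hθ]; simp
    rw [hη]; simp only; rw [this, Real.cos_zero]
  have hηle : ∀ m ≤ n, η m ≤ η n := by
    intro m hm
    rcases eq_or_lt_of_le hm with rfl | h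
    · exact le_refl _
    · exact (hηmono m n h le_rfl).le
  have hrlt1 : ∀ j : Fin n, r j < 1 := by
    intro j
    have h1 := (hrIoo j).2
    have h2 := hηle ((j:ℕ)+1) (by omega)
    rw [hηn] at h2
    linarith
  have hrmono : ∀ i j : Fin n, (i:ℕ) < (j:ℕ) → r i < r j := by
    intro i j hij
    have h1 := (hrIoo i).2
    have h2 := (hrIoo j).1
    have h3 : η ((i:ℕ)+1) ≤ η (j:ℕ) := by
      rcases eq_or_lt_of_le (show (i:ℕ)+1 ≤ (j:ℕ) from hij) with h | h
      · rw [h]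
      · exact (hηmono _ _ h (by omega)).le
    linarith
  set f : Fin (n+1) → ℝ := fun j => if h : (j:ℕ) < n then r ⟨j, h⟩ else x0 with hf
  have hfmono : StrictMono f := by
    intro a b hab
    have hab' : (a:ℕ) < (b:ℕ) := hab
    rw [hf]
    simp only
    split_ifs with h1 h2 h2
    · exact hrmono _ _ hab'
    · exact lt_trans (hrlt1 _) hx0
    · omega
    · omega
  have heval : ∀ j : Fin (n+1), q.eval (f j) = 0 := by
    intro j
    rw [hf]
    simp only
    split_ifs with h1
    · exact hrzero _
    · rw [hq]
      simp only [eval_sub, eval_mul, eval_C]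
      rw [hc, div_mul_cancel₀ _ hpne]
      ring
  have hqdeg : q.natDegree ≤ n := by
    rw [hq]
    refine le_trans (natDegree_sub_le _ _) (max_le (cheb_natDegree_le n) ?_)
    refine le_trans natDegree_mul_le ?_
    simp [hp]
  have hq0 : q = 0 := by
    refine eq_zero_of_natDegree_lt_card_of_eval_eq_zero q hfmono.injective heval ?_
    rw [Fintype.card_fin]
    omega
  have hTeq : T = C c * p := by
    have := sub_eq_zero.mp hq0
    exact this
  have : (1:ℝ) < 1 := by
    have h1 : |T.eval (η n)| = 1 := by rw [hTeval n]; exact habs_e n le_rfl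
    have h2 : |T.eval (η n)| ≤ |c| * M := by
      rw [hTeq]
      simp only [eval_mul, eval_C, abs_mul]
      exact mul_le_mul_of_nonneg_left (hM _ (hηIcc n)) (abs_nonneg c)
    linarith
  exact absurd this (lt_irrefl 1)


theorem norm_comparison_shrink (b δ : ℝ) (hδ : 0 < δ) (hb : δ < b)
    (n : ℕ) (p : Polynomial ℝ) (hp : p.natDegree ≤ n) :
    (⨆ x : Set.Icc (0 : ℝ) (b - δ), |p.eval (x : ℝ)|) ≥
      (⨆ x : Set.Icc (0 : ℝ) b, |p.eval (x : ℝ)|) *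
        (1 / (1 + (2 * δ / (b - δ)) * (1 + Real.sqrt (1 + (b - δ) / δ)))) ^ n := by
  set a : ℝ := b - δ with ha
  have ha0 : 0 < a := by rw [ha]; linarith
  set k : ℝ := (2 * δ / a) * (1 + Real.sqrt (1 + a / δ)) with hk
  have hk0 : 0 ≤ k := by
    apply mul_nonneg (by positivity)
    have := Real.sqrt_nonneg (1 + a / δ)
    linarith
  set S1 : ℝ := ⨆ x : Set.Icc (0 : ℝ) a, |p.eval (x : ℝ)| with hS1
  set S2 : ℝ := ⨆ x : Set.Icc (0 : ℝ) b, |p.eval (x : ℝ)| with hS2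
  have hne1 : Nonempty (Set.Icc (0:ℝ) a) := ⟨⟨0, by constructor <;> linarith⟩⟩
  have hne2 : Nonempty (Set.Icc (0:ℝ) b) := ⟨⟨0, by constructor <;> linarith⟩⟩
  -- boundedness on [0, a]
  have hbdd1 : BddAbove (Set.range fun x : Set.Icc (0:ℝ) a => |p.eval (x:ℝ)|) := by
    obtain ⟨c, hc⟩ := IsCompact.bddAbove_image (isCompact_Icc (a := (0:ℝ)) (b := a))
      (Continuous.continuousOn ((Polynomial.continuous p).abs))
    refine ⟨c, ?_⟩
    rintro _ ⟨x, rfl⟩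
    exact hc (Set.mem_image_of_mem _ x.2)
  have hle1 : ∀ x ∈ Set.Icc (0:ℝ) a, |p.eval x| ≤ S1 := by
    intro x hx
    exact le_ciSup hbdd1 (⟨x, hx⟩ : Set.Icc (0:ℝ) a)
  have hS1nonneg : 0 ≤ S1 := le_trans (abs_nonneg _) (hle1 0 ⟨le_refl 0, ha0.le⟩)
  -- key pointwise bound
  have key : ∀ x ∈ Set.Icc (0:ℝ) b, |p.eval x| ≤ S1 * (1 + k)^n := by
    intro x hx
    have h1k : 1 ≤ (1 + k)^n := one_le_pow₀ (by linarith)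
    rcases le_or_gt x a with hxa | hxa
    · calc |p.eval x| ≤ S1 := hle1 x ⟨hx.1, hxa⟩
        _ = S1 * 1 := (mul_one _).symm
        _ ≤ S1 * (1 + k)^n := by nlinarith
    · -- x ∈ (a, b]
      set q : ℝ[X] := p.comp (Polynomial.C (a/2) * (X + 1)) with hqdef
      have hqdeg : q.natDegree ≤ n := by
        refine le_trans natDegree_comp_le ?_
        have h1 : (Polynomial.C (a/2) * (X + 1) : ℝ[X]).natDegree ≤ 1 := by
          compute_degree
        calc p.natDegree * (Polynomial.C (a/2) * (X + 1) : ℝ[X]).natDegree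
            ≤ n * 1 := Nat.mul_le_mul hp h1
          _ = n := mul_one n
      have hqeval : ∀ y : ℝ, q.eval y = p.eval (a * (y + 1) / 2) := by
        intro y
        rw [hqdef, eval_comp]
        congr 1
        simp only [eval_mul, eval_C, eval_add, eval_X, eval_one]
        ring
      have hqM : ∀ y ∈ Set.Icc (-1:ℝ) 1, |q.eval y| ≤ S1 := by
        intro y hy
        rw [hqeval]
        apply hle1
        constructor
        · have : 0 ≤ y + 1 := by linarith [hy.1]
          positivity
        · rw [div_le_iff₀ (by norm_num : (0:ℝ) < 2)]
          nlinarith [hy.2]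
      set y0 : ℝ := 2 * x / a - 1 with hy0
      have hy01 : 1 < y0 := by
        rw [hy0, lt_sub_iff_add_lt, lt_div_iff₀ ha0]
        linarith
      have hxy0 : a * (y0 + 1) / 2 = x := by
        rw [hy0]; field_simp; ring
      have hmain : |p.eval x| ≤ (Polynomial.Chebyshev.T ℝ (n:ℤ)).eval y0 * S1 := by
        have := cheb_extremal n q hqdeg S1 hqM hy01
        rwa [hqeval, hxy0] at this
      -- now bound the Chebyshev value
      have hTub := (cheb_bounds n hy01.le).2
      set s0 : ℝ := Real.sqrt (y0^2 - 1) with hs0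
      have hs0nn : 0 ≤ s0 := Real.sqrt_nonneg _
      set t : ℝ := 1 + 2 * δ / a with ht
      have hy0t : y0 ≤ t := by
        rw [hy0, ht]
        rw [sub_le_iff_le_add, div_le_iff₀ ha0]
        have h' : 2 * δ / a * a = 2 * δ := div_mul_cancel₀ _ (ne_of_gt ha0)
        have hxb : x ≤ b := hx.2
        have hab : a = b - δ := ha
        nlinarith
      have hsq : Real.sqrt (1 + a / δ) ^ 2 = 1 + a / δ :=
        Real.sq_sqrt (by positivity)
      have hst : Real.sqrt (t^2 - 1) = (2 * δ / a) * Real.sqrt (1 + a / δ) := by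
        rw [show t^2 - 1 = ((2 * δ / a) * Real.sqrt (1 + a / δ))^2 by
          rw [mul_pow, hsq, ht]; field_simp; ring]
        exact Real.sqrt_sq (by positivity)
      have hs0t : s0 ≤ Real.sqrt (t^2 - 1) := by
        rw [hs0]
        apply Real.sqrt_le_sqrt
        nlinarith
      have hu0k : y0 + s0 ≤ 1 + k := by
        have h2 : s0 ≤ 2 * δ / a * Real.sqrt (1 + a / δ) := by
          rw [← hst]; exact hs0t
        have h3 : y0 ≤ 1 + 2 * δ / a := by rw [← ht]; exact hy0t
        rw [hk]
        nlinarith [Real.sqrt_nonneg (1 + a / δ)]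
      calc |p.eval x| ≤ (Polynomial.Chebyshev.T ℝ (n:ℤ)).eval y0 * S1 := hmain
        _ ≤ (y0 + s0)^n * S1 := mul_le_mul_of_nonneg_right hTub hS1nonneg
        _ ≤ (1 + k)^n * S1 := by
            apply mul_le_mul_of_nonneg_right ?_ hS1nonneg
            apply pow_le_pow_left₀ (by linarith) hu0k
        _ = S1 * (1 + k)^n := mul_comm _ _
  have hS2le : S2 ≤ S1 * (1 + k)^n := by
    rw [hS2]
    exact ciSup_le fun x => key x x.2
  have h1k : (0:ℝ) < 1 + k := by linarith
  rw [ge_iff_le, one_div, inv_pow, ← div_eq_mul_inv, div_le_iff₀ (pow_pos h1k n)]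
  exact hS2le
end

section
/- For every integer n > 2: (1/n) + 1/(n²(n−1)) < b_max(n) ≤ 4n/(2n−1)², where b_max(n) = sup{ b > 1/n : t_M([0,b]) = 1/n }. -/
/-- The monic integer transfinite diameter of a set `I ⊆ ℝ`:
`t_M(I) = lim_{n→∞} inf_{p ∈ M_n} ‖p‖_I^{1/n}`, where `M_n` is the set of monic
integer polynomials of degree `n` (the limit is formalized as a `limsup`). -/
noncomputable def monicIntTransDiam (I : Set ℝ) : ℝ :=
  Filter.limsup (fun n : ℕ =>
    sInf {y : ℝ | ∃ p : Polynomial ℤ, p.Monic ∧ p.natDegree = n ∧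
      y = (⨆ x : I, |Polynomial.aeval (x : ℝ) p|) ^ ((1 : ℝ) / n)}) Filter.atTop

/-- `b_max(n) = sup { b > 1/n : t_M([0,b]) = 1/n }`. -/
noncomputable def bMax (n : ℕ) : ℝ :=
  sSup {b : ℝ | 1 / (n : ℝ) < b ∧ monicIntTransDiam (Set.Icc 0 b) = 1 / (n : ℝ)}

open Polynomial Filter Set Finset Real

noncomputable def supAbs (b : ℝ) (p : Polynomial ℤ) : ℝ :=
  ⨆ x : (Set.Icc (0:ℝ) b), |Polynomial.aeval (x:ℝ) p|

def Sset (b : ℝ) (k : ℕ) : Set ℝ :=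
  {y : ℝ | ∃ p : Polynomial ℤ, p.Monic ∧ p.natDegree = k ∧
      y = (⨆ x : (Set.Icc (0:ℝ) b), |Polynomial.aeval (x : ℝ) p|) ^ ((1 : ℝ) / k)}

lemma bddAbove_range_aux (b : ℝ) (p : Polynomial ℤ) :
    BddAbove (Set.range fun x : Set.Icc (0:ℝ) b => |Polynomial.aeval (x:ℝ) p|) := by
  have hc : Continuous fun x : ℝ => |Polynomial.aeval x p| :=
    (Polynomial.continuous_aeval p).abs
  have := (isCompact_Icc (a := (0:ℝ)) (b := b)).bddAbove_image hc.continuousOn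
  rw [show (fun x : Set.Icc (0:ℝ) b => |Polynomial.aeval (x:ℝ) p|) =
    (Set.Icc (0:ℝ) b).restrict (fun x : ℝ => |Polynomial.aeval x p|) from rfl]
  rw [Set.image_eq_range] at this
  exact this

lemma le_supAbs {b : ℝ} {x : ℝ} (hx : x ∈ Set.Icc (0:ℝ) b) (p : Polynomial ℤ) :
    |Polynomial.aeval x p| ≤ supAbs b p :=
  le_ciSup (bddAbove_range_aux b p) ⟨x, hx⟩

lemma supAbs_nonneg {b : ℝ} (hb : 0 ≤ b) (p : Polynomial ℤ) : 0 ≤ supAbs b p :=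
  le_trans (abs_nonneg _) (le_supAbs (Set.mem_Icc.2 ⟨le_refl 0, hb⟩) p)

lemma supAbs_le {b : ℝ} (hb : 0 ≤ b) {p : Polynomial ℤ} {C : ℝ}
    (hC : ∀ x ∈ Set.Icc (0:ℝ) b, |Polynomial.aeval x p| ≤ C) : supAbs b p ≤ C := by
  haveI : Nonempty (Set.Icc (0:ℝ) b) := ⟨⟨0, by simp [hb]⟩⟩
  exact ciSup_le fun x => hC x x.2

lemma mem_Sset {b : ℝ} {p : Polynomial ℤ} (hp : p.Monic) {k : ℕ} (hd : p.natDegree = k) :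
    (supAbs b p) ^ ((1:ℝ)/k) ∈ Sset b k := ⟨p, hp, hd, rfl⟩

lemma Sset_nonempty (b : ℝ) (k : ℕ) : (Sset b k).Nonempty :=
  ⟨_, mem_Sset (monic_X_pow k) (natDegree_X_pow k)⟩

lemma Sset_nonneg {b : ℝ} (hb : 0 ≤ b) {k : ℕ} {y : ℝ} (hy : y ∈ Sset b k) : 0 ≤ y := by
  obtain ⟨p, hm, hd, rfl⟩ := hy
  exact Real.rpow_nonneg (supAbs_nonneg hb p) _

lemma bddBelow_Sset {b : ℝ} (hb : 0 ≤ b) (k : ℕ) : BddBelow (Sset b k) :=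
  ⟨0, fun y hy => Sset_nonneg hb hy⟩

lemma pow_rpow_inv' {x : ℝ} (hx : 0 ≤ x) {k : ℕ} (hk : k ≠ 0) :
    (x ^ k) ^ ((1:ℝ)/k) = x := by
  rw [one_div, Real.pow_rpow_inv_natCast hx hk]

lemma monicIntTransDiam_eq (b : ℝ) :
    monicIntTransDiam (Set.Icc 0 b) = limsup (fun k => sInf (Sset b k)) atTop := rfl


lemma int_point (p : Polynomial ℤ) (hp : p.Monic) (hk : 1 ≤ p.natDegree) (q : ℕ) (hq : 2 ≤ q) :
    ((q:ℝ))⁻¹ ^ p.natDegree ≤ |Polynomial.aeval ((q:ℝ))⁻¹ p| := by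
  set k := p.natDegree with hkdef
  have hq0 : (0:ℝ) < q := by positivity
  have hqne : (q:ℝ) ≠ 0 := ne_of_gt hq0
  set N : ℤ := ∑ i ∈ Finset.range (k+1), p.coeff i * (q:ℤ)^(k-i) with hN
  have claim1 : (N : ℝ) = (q:ℝ)^k * Polynomial.aeval ((q:ℝ))⁻¹ p := by
    rw [Polynomial.aeval_eq_sum_range (R := ℤ) (((q:ℝ))⁻¹), Finset.mul_sum]
    push_cast [hN]
    refine Finset.sum_congr rfl fun i hi => ?_
    have hik : i ≤ k := Nat.lt_succ_iff.mp (Finset.mem_range.mp hi)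
    have : (q:ℝ)^(k-i) * (q:ℝ)^i = (q:ℝ)^k := by
      rw [← pow_add, Nat.sub_add_cancel hik]
    have h2 : (q:ℝ)^(k-i) = (q:ℝ)^k * ((q:ℝ)⁻¹)^i := by
      field_simp
      rw [← this, one_div, inv_pow, mul_assoc, mul_inv_cancel₀ (pow_ne_zero _ hqne), mul_one]
    rw [h2]
    push_cast
    ring_nf
  have claim2 : ∃ m : ℤ, N = q * m + 1 := by
    refine ⟨∑ i ∈ Finset.range k, p.coeff i * (q:ℤ)^(k-i-1), ?_⟩
    rw [hN, Finset.sum_range_succ, Nat.sub_self, pow_zero, mul_one,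
      hp.coeff_natDegree, Finset.mul_sum]
    congr 1
    refine Finset.sum_congr rfl fun i hi => ?_
    have hik : i < k := Finset.mem_range.mp hi
    have : (q:ℤ)^(k-i) = q * (q:ℤ)^(k-i-1) := by
      rw [← pow_succ']
      congr 1
      omega
    rw [this]; ring
  have hNne : N ≠ 0 := by
    obtain ⟨m, hm⟩ := claim2
    intro h
    have hd : (q:ℤ) ∣ 1 := ⟨-m, by rw [mul_neg]; linarith⟩
    have := Int.le_of_dvd one_pos hd
    omega
  have hN1 : (1:ℝ) ≤ |(N:ℝ)| := by
    have := Int.one_le_abs hNne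
    calc (1:ℝ) = ((1:ℤ):ℝ) := by norm_num
    _ ≤ ((|N|:ℤ):ℝ) := by exact_mod_cast this
    _ = |(N:ℝ)| := by push_cast; ring
  have : |(N:ℝ)| = (q:ℝ)^k * |Polynomial.aeval ((q:ℝ))⁻¹ p| := by
    rw [claim1, abs_mul, abs_of_pos (by positivity)]
  rw [this] at hN1
  have hpow : (0:ℝ) < (q:ℝ)^k := by positivity
  rw [inv_pow, inv_eq_one_div, div_le_iff₀ hpow]
  nlinarith

lemma sInf_Sset_ge {b : ℝ} (hb : 0 ≤ b) {q k : ℕ} (hq : 2 ≤ q) (hmem : ((q:ℝ))⁻¹ ≤ b)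
    (hk : 1 ≤ k) : ((q:ℝ))⁻¹ ≤ sInf (Sset b k) := by
  refine le_csInf (Sset_nonempty b k) ?_
  rintro y ⟨p, hm, hd, rfl⟩
  have hq0 : (0:ℝ) < (q:ℝ)⁻¹ := by positivity
  have h1 : ((q:ℝ)⁻¹)^k ≤ supAbs b p := by
    have := int_point p hm (hd ▸ hk) q hq
    rw [hd] at this
    exact this.trans (le_supAbs (Set.mem_Icc.2 ⟨le_of_lt hq0, hmem⟩) p)
  calc ((q:ℝ))⁻¹ = (((q:ℝ)⁻¹)^k) ^ ((1:ℝ)/k) := (pow_rpow_inv' (le_of_lt hq0) (by omega)).symm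
  _ ≤ (supAbs b p) ^ ((1:ℝ)/k) :=
      Real.rpow_le_rpow (by positivity) h1 (by positivity)

lemma sInf_Sset_le {b : ℝ} (hb : 0 ≤ b) {p : Polynomial ℤ} (hp : p.Monic) {k : ℕ}
    (hd : p.natDegree = k) : sInf (Sset b k) ≤ (supAbs b p) ^ ((1:ℝ)/k) :=
  csInf_le (bddBelow_Sset hb k) (mem_Sset hp hd)

lemma isBoundedUnder_sInf {b : ℝ} (hb : 0 ≤ b) :
    IsBoundedUnder (· ≤ ·) atTop (fun k => sInf (Sset b k)) := by
  refine ⟨max b 1, ?_⟩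
  rw [Filter.eventually_map]
  filter_upwards [Filter.eventually_ge_atTop 1] with k hk
  have h1 : sInf (Sset b k) ≤ (supAbs b ((Polynomial.X)^k)) ^ ((1:ℝ)/k) :=
    sInf_Sset_le hb (monic_X_pow k) (natDegree_X_pow k)
  have h2 : supAbs b ((Polynomial.X : Polynomial ℤ)^k) ≤ b^k := by
    refine supAbs_le hb fun x hx => ?_
    rw [map_pow, Polynomial.aeval_X, abs_pow, abs_of_nonneg hx.1]
    exact pow_le_pow_left₀ hx.1 hx.2 k
  calc sInf (Sset b k) ≤ (supAbs b ((Polynomial.X)^k)) ^ ((1:ℝ)/k) := h1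
  _ ≤ (b^k) ^ ((1:ℝ)/k) := Real.rpow_le_rpow (supAbs_nonneg hb _) h2 (by positivity)
  _ = b := pow_rpow_inv' hb (by omega)
  _ ≤ max b 1 := le_max_left _ _

lemma limsup_sInf_ge {b : ℝ} (hb : 0 ≤ b) {q : ℕ} (hq : 2 ≤ q) (hmem : ((q:ℝ))⁻¹ ≤ b) :
    ((q:ℝ))⁻¹ ≤ limsup (fun k => sInf (Sset b k)) atTop := by
  refine Filter.le_limsup_of_frequently_le ?_ (isBoundedUnder_sInf hb)
  refine Filter.Eventually.frequently ?_
  filter_upwards [Filter.eventually_ge_atTop 1] with k hk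
  exact sInf_Sset_ge hb hq hmem hk

lemma limsup_sInf_le_of_small_poly {b : ℝ} (hb : 0 < b) (hb1 : b ≤ 1) {n : ℕ} (hn : 2 ≤ n)
    {Q : Polynomial ℤ} (hQ : Q.Monic) (hd1 : 1 ≤ Q.natDegree)
    (hQn : supAbs b Q ≤ ((n:ℝ))⁻¹ ^ Q.natDegree) :
    limsup (fun k => sInf (Sset b k)) atTop ≤ ((n:ℝ))⁻¹ := by
  set d := Q.natDegree with hddef
  have hn0 : (0:ℝ) < n := by positivity
  have hn1 : (1:ℝ) ≤ n := by exact_mod_cast Nat.one_le_of_lt hn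
  set v : ℕ → ℝ := fun k => ((n:ℝ))⁻¹ * (n:ℝ) ^ ((d:ℝ)/k) with hv
  have htend : Tendsto v atTop (nhds ((n:ℝ)⁻¹)) := by
    have h0 : Tendsto (fun k : ℕ => (d:ℝ)/k) atTop (nhds 0) :=
      tendsto_const_div_atTop_nhds_zero_nat (d:ℝ)
    have h1 : Tendsto (fun k : ℕ => (n:ℝ) ^ ((d:ℝ)/k)) atTop (nhds 1) := by
      have hcont : Continuous fun x : ℝ => (n:ℝ) ^ x := by
        simp_rw [Real.rpow_def_of_pos hn0]
        exact Real.continuous_exp.comp (continuous_const.mul continuous_id)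
      have := (hcont.tendsto 0).comp h0
      simpa [Function.comp_def] using this
    have := h1.const_mul ((n:ℝ)⁻¹)
    simpa using this
  have hbound : ∀ᶠ k in atTop, sInf (Sset b k) ≤ v k := by
    filter_upwards [Filter.eventually_ge_atTop 1] with k hk
    set r := k % d with hr
    set j := k / d with hj
    have hrd : r < d := Nat.mod_lt k (by omega)
    have hkeq : r + j * d = k := by
      rw [hr, hj]
      rw [mul_comm]
      exact Nat.mod_add_div k d
    set p := (Polynomial.X : Polynomial ℤ)^r * Q^j with hp
    have hpm : p.Monic := (monic_X_pow r).mul (hQ.pow j)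
    have hpd : p.natDegree = k := by
      rw [hp, Polynomial.Monic.natDegree_mul (monic_X_pow r) (hQ.pow j),
        natDegree_X_pow, hQ.natDegree_pow, ← hddef, hkeq]
    have hsup : supAbs b p ≤ (n:ℝ) ^ (((d:ℝ) - k)) := by
      have hstep : supAbs b p ≤ b^r * (((n:ℝ))⁻¹ ^ d)^j := by
        refine supAbs_le (le_of_lt hb) fun x hx => ?_
        rw [hp, map_mul, map_pow, map_pow, Polynomial.aeval_X, abs_mul, abs_pow, abs_pow,
          abs_of_nonneg hx.1]
        have e1 : x^r ≤ b^r := pow_le_pow_left₀ hx.1 hx.2 r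
        have e2 : |Polynomial.aeval x Q| ≤ ((n:ℝ))⁻¹ ^ d := (le_supAbs hx Q).trans hQn
        have e3 : |Polynomial.aeval x Q|^j ≤ (((n:ℝ))⁻¹ ^ d)^j :=
          pow_le_pow_left₀ (abs_nonneg _) e2 j
        exact mul_le_mul e1 e3 (by positivity) (by positivity)
      have hstep2 : b^r * (((n:ℝ))⁻¹ ^ d)^j ≤ (((n:ℝ))⁻¹)^(d*j) := by
        rw [← pow_mul]
        have : b^r ≤ 1 := pow_le_one₀ (le_of_lt hb) hb1
        nlinarith [pow_nonneg (le_of_lt hb) r, pow_nonneg (inv_nonneg.2 (le_of_lt hn0)) (d*j),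
          pow_le_one₀ (le_of_lt hb) hb1 (n := r)]
      have hstep3 : (((n:ℝ))⁻¹)^(d*j) = (n:ℝ) ^ (-(d*j : ℕ) : ℝ) := by
        rw [← Real.rpow_natCast ((n:ℝ))⁻¹ (d*j), Real.inv_rpow (le_of_lt hn0),
          ← Real.rpow_neg (le_of_lt hn0)]
      have hstep4 : (n:ℝ) ^ (-(d*j : ℕ) : ℝ) ≤ (n:ℝ) ^ (((d:ℝ) - k)) := by
        refine Real.rpow_le_rpow_of_exponent_le hn1 ?_
        have : (d*j : ℕ) = (k - r : ℕ) := by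
          rw [mul_comm]; exact Nat.eq_sub_of_add_eq' hkeq
        rw [this]
        have hrk : r ≤ k := Nat.mod_le k d
        push_cast [hrk]
        have : (r:ℝ) ≤ d := by exact_mod_cast le_of_lt hrd
        linarith
      linarith [hstep.trans hstep2, hstep3 ▸ hstep4]
    have : sInf (Sset b k) ≤ (supAbs b p) ^ ((1:ℝ)/k) := sInf_Sset_le (le_of_lt hb) hpm hpd
    refine this.trans ?_
    have h5 : (supAbs b p) ^ ((1:ℝ)/k) ≤ ((n:ℝ) ^ (((d:ℝ) - k))) ^ ((1:ℝ)/k) :=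
      Real.rpow_le_rpow (supAbs_nonneg (le_of_lt hb) p) hsup (by positivity)
    refine h5.trans (le_of_eq ?_)
    rw [← Real.rpow_mul (le_of_lt hn0), hv]
    have hkne : (k:ℝ) ≠ 0 := by
      have : (0:ℕ) < k := hk
      positivity
    have : ((d:ℝ) - k) * ((1:ℝ)/k) = (d:ℝ)/k + (-1) := by field_simp; ring
    rw [this, Real.rpow_add hn0, Real.rpow_neg_one]
    ring
  have hcob : IsCoboundedUnder (· ≤ ·) atTop (fun k => sInf (Sset b k)) := by
    refine Filter.IsBoundedUnder.isCoboundedUnder_le (⟨0, ?_⟩ : IsBoundedUnder (· ≥ ·) atTop _)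
    rw [Filter.eventually_map]
    filter_upwards [] with k
    exact le_csInf (Sset_nonempty b k) (fun y hy => Sset_nonneg (le_of_lt hb) hy)
  calc limsup (fun k => sInf (Sset b k)) atTop ≤ limsup v atTop :=
        limsup_le_limsup hbound hcob htend.isBoundedUnder_le
  _ = ((n:ℝ))⁻¹ := htend.limsup_eq


lemma sum_id (t : ℝ) (M : ℕ) :
    (1-t)^2 * (∑ j ∈ Finset.range M, ((j:ℝ)+1)*t^j) = 1 - ((M:ℝ)+1)*t^M + (M:ℝ)*t^(M+1) := by
  induction M with
  | zero => norm_num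
  | succ m ih =>
    rw [Finset.sum_range_succ, mul_add]
    push_cast
    linear_combination ih

lemma core_upper {M : ℕ} (hM : 2 ≤ M) {t : ℝ} (ht0 : 0 ≤ t) (htM : t ≤ M) :
    t^M * (t^2 + ((M:ℝ)+2)*(1-t)) ≤ 1 := by
  have hM1 : 1 ≤ M := by omega
  set S := ∑ j ∈ Finset.range M, ((j:ℝ)+1)*t^j with hS
  have hid := sum_id t M
  have hsingle : ((M:ℝ))*t^(M-1) ≤ S := by
    have hmem : M - 1 ∈ Finset.range M := by simp; omega
    have := Finset.single_le_sum (f := fun (j : ℕ) => ((j:ℝ)+1)*t^j)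
      (fun j _ => mul_nonneg (by positivity : (0:ℝ) ≤ (j:ℝ)+1) (pow_nonneg ht0 j)) hmem
    have hcast : ((M-1 : ℕ):ℝ) + 1 = (M:ℝ) := by
      have : (1:ℕ) ≤ M := hM1
      push_cast [this]
      ring
    rwa [hcast] at this
  have htM' : t^M ≤ (M:ℝ)*t^(M-1) := by
    have : t^M = t * t^(M-1) := by
      rw [← pow_succ']
      congr 1
      omega
    rw [this]
    exact mul_le_mul_of_nonneg_right htM (by positivity)
  have hge : 0 ≤ S - t^M := by linarith
  have hprod : 0 ≤ (1-t)^2 * (S - t^M) := mul_nonneg (sq_nonneg _) hge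
  have hkey : 1 - t^M * (t^2 + ((M:ℝ)+2)*(1-t)) = (1-t)^2 * (S - t^M) := by
    rw [hS]
    linear_combination -(sum_id t M)
  linarith [hkey ▸ hprod]

lemma exp_quarter : Real.exp (1/4 : ℝ) ≤ 4/3 := by
  have h := Real.add_one_le_exp (-(1/4) : ℝ)
  rw [Real.exp_neg] at h
  have hpos := Real.exp_pos (1/4 : ℝ)
  rw [inv_eq_one_div] at h
  have h2 : (3/4 : ℝ) ≤ 1 / Real.exp (1/4) := by linarith
  rw [le_div_iff₀ hpos] at h2
  linarith

lemma myExpBound : Real.exp ((119:ℝ)/96) ≤ 96/23 := by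
  have h1 : Real.exp ((119:ℝ)/96) ≤ Real.exp (5/4) :=
    Real.exp_le_exp.2 (by norm_num)
  have h2 : Real.exp ((5:ℝ)/4) = Real.exp 1 * Real.exp (1/4) := by
    rw [← Real.exp_add]; norm_num
  have h3 := Real.exp_one_lt_d9.le
  have h4 := exp_quarter
  have h5 : Real.exp 1 * Real.exp (1/4) ≤ 2.7182818286 * (4/3) :=
    mul_le_mul h3 h4 (Real.exp_pos _).le (by norm_num)
  calc Real.exp ((119:ℝ)/96) ≤ Real.exp 1 * Real.exp (1/4) := h2 ▸ h1
  _ ≤ 2.7182818286 * (4/3) := h5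
  _ ≤ 96/23 := by norm_num

lemma core_lower_aux {M : ℕ} {s δ : ℝ} (h0 : 0 ≤ s) (hsδ : s ≤ δ) (hδ0 : 0 ≤ δ)
    (hδM : (M:ℝ)*δ ≤ 119/96) :
    (1+s)^M * ((M:ℝ)*s - 1 - s^2) ≤ 1 := by
  rcases le_or_gt ((M:ℝ)*s - 1 - s^2) 0 with h | h
  · have : (0:ℝ) ≤ (1+s)^M := by positivity
    nlinarith
  · have hfac1 : (1+s)^M ≤ Real.exp ((119:ℝ)/96) := by
      have e1 : (1+s) ≤ Real.exp s := by
        have := Real.add_one_le_exp s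
        linarith
      have e2 : (1+s)^M ≤ (Real.exp s)^M :=
        pow_le_pow_left₀ (by linarith) e1 M
      have e3 : (Real.exp s)^M = Real.exp ((M:ℝ)*s) := by
        rw [← Real.exp_nat_mul]
      have e4 : Real.exp ((M:ℝ)*s) ≤ Real.exp ((119:ℝ)/96) := by
        apply Real.exp_le_exp.2
        have : (M:ℝ)*s ≤ (M:ℝ)*δ := mul_le_mul_of_nonneg_left hsδ (by positivity)
        linarith
      calc (1+s)^M ≤ (Real.exp s)^M := e2
      _ = Real.exp ((M:ℝ)*s) := e3
      _ ≤ Real.exp ((119:ℝ)/96) := e4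
    have hfac2 : (M:ℝ)*s - 1 - s^2 ≤ 23/96 := by
      have : (M:ℝ)*s ≤ (M:ℝ)*δ := mul_le_mul_of_nonneg_left hsδ (by positivity)
      nlinarith
    have hexp := myExpBound
    have hpos : (0:ℝ) ≤ (1+s)^M := by positivity
    calc (1+s)^M * ((M:ℝ)*s - 1 - s^2) ≤ Real.exp ((119:ℝ)/96) * (23/96) := by
          apply mul_le_mul hfac1 hfac2 h.le (Real.exp_pos _).le
    _ ≤ (96/23) * (23/96) := by nlinarith [Real.exp_pos ((119:ℝ)/96)]
    _ = 1 := by norm_num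

lemma core_ineq {M : ℕ} (hM : 7 ≤ M) {δ t : ℝ} (hδ0 : 0 ≤ δ) (hδ1 : δ ≤ 1)
    (hδM : (M:ℝ)*δ ≤ 119/96) (ht0 : 0 ≤ t) (ht : t ≤ 1+δ) :
    |t^M * (t^2 + ((M:ℝ)+2)*(1-t))| ≤ 1 := by
  have hMR : (7:ℝ) ≤ M := by exact_mod_cast hM
  rw [abs_le]
  constructor
  · rcases le_or_gt t 1 with h | h
    · have : 0 ≤ t^M * (t^2 + ((M:ℝ)+2)*(1-t)) := by
        apply mul_nonneg (by positivity)
        nlinarith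
      linarith
    · set s := t - 1 with hs
      have hs0 : 0 ≤ s := by simp [hs]; linarith
      have hsδ : s ≤ δ := by simp [hs]; linarith
      have hrw : -(t^M * (t^2 + ((M:ℝ)+2)*(1-t))) = (1+s)^M * ((M:ℝ)*s - 1 - s^2) := by
        have : t = 1 + s := by simp [hs]
        rw [this]
        ring
      have := core_lower_aux hs0 hsδ hδ0 hδM
      linarith [hrw ▸ this]
  · exact core_upper (by omega) ht0 (by linarith)


lemma prod_neg_aux {α : Type*} (s : Finset α) (f : α → ℝ) :
    ∏ i ∈ s, (-(f i)) = (-1)^s.card * ∏ i ∈ s, f i := by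
  calc ∏ i ∈ s, (-(f i)) = ∏ i ∈ s, ((-1) * f i) := by
        refine Finset.prod_congr rfl fun i _ => by ring
  _ = (∏ _i ∈ s, (-1:ℝ)) * ∏ i ∈ s, f i := Finset.prod_mul_distrib
  _ = (-1)^s.card * ∏ i ∈ s, f i := by rw [Finset.prod_const]

lemma chebT_natDegree_le : ∀ m : ℕ, (Polynomial.Chebyshev.T ℝ (m:ℤ)).natDegree ≤ m := by
  intro m
  induction m using Nat.twoStepInduction with
  | zero => simp [Polynomial.Chebyshev.T_zero]
  | one => simp [Polynomial.Chebyshev.T_one]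
  | more n ih1 ih2 =>
    have hcast : ((n+2:ℕ):ℤ) = (n:ℤ) + 2 := by push_cast; ring
    rw [hcast, Polynomial.Chebyshev.T_add_two]
    refine le_trans (Polynomial.natDegree_sub_le _ _) ?_
    have h1 : (2 * Polynomial.X * Polynomial.Chebyshev.T ℝ ((n:ℤ)+1)).natDegree ≤ n + 2 := by
      refine le_trans (Polynomial.natDegree_mul_le) ?_
      have h2 : (2 * Polynomial.X : Polynomial ℝ).natDegree ≤ 1 := by
        refine le_trans (Polynomial.natDegree_mul_le) ?_
        simp
      have hcast1 : ((n+1:ℕ):ℤ) = (n:ℤ) + 1 := by push_cast; ring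
      rw [← hcast1]
      omega
    have h2 : (Polynomial.Chebyshev.T ℝ (n:ℤ)).natDegree ≤ n + 2 := le_trans ih1 (by omega)
    omega

lemma chebT_eval_le {z : ℝ} (hz : 1 ≤ z) (k : ℕ) :
    (Polynomial.Chebyshev.T ℝ (k:ℤ)).eval z ≤ (z + Real.sqrt (z^2-1))^k := by
  set w := Real.sqrt (z^2-1) with hw
  have hw0 : 0 ≤ w := Real.sqrt_nonneg _
  have hw2 : w^2 = z^2 - 1 := Real.sq_sqrt (by nlinarith)
  have hwz : w ≤ z := by nlinarith
  set g := z + w with hg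
  set h := z - w with hh
  have hgh : g * h = 1 := by rw [hg, hh]; nlinarith
  have h2z : 2*z = g + h := by rw [hg, hh]; ring
  have hg1 : 1 ≤ g := by rw [hg]; linarith
  have hh0 : 0 ≤ h := by rw [hh]; linarith
  have hhg : h ≤ g := by rw [hg, hh]; linarith
  have claim : ∀ m : ℕ, (Polynomial.Chebyshev.T ℝ (m:ℤ)).eval z = (g^m + h^m)/2 := by
    intro m
    induction m using Nat.twoStepInduction with
    | zero => norm_num [Polynomial.Chebyshev.T_zero]
    | one => simp [Polynomial.Chebyshev.T_one]; linarith
    | more n ih1 ih2 =>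
      have hcast : ((n+2:ℕ):ℤ) = (n:ℤ) + 2 := by push_cast; ring
      have hcast1 : ((n+1:ℕ):ℤ) = (n:ℤ) + 1 := by push_cast; ring
      rw [hcast, Polynomial.Chebyshev.T_add_two]
      rw [Polynomial.eval_sub, Polynomial.eval_mul, Polynomial.eval_mul, Polynomial.eval_X,
        Polynomial.eval_ofNat]
      rw [← hcast1] at *
      rw [ih1, ih2]
      linear_combination ((g^(n+1)+h^(n+1))/2) * h2z + ((g^n+h^n)/2) * hgh
  rw [claim k]
  have : h^k ≤ g^k := pow_le_pow_left₀ hh0 hhg k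
  have hgk : 0 ≤ g^k := by positivity
  nlinarith [pow_nonneg hh0 k]


lemma cheb_compare {k : ℕ} (hk : 1 ≤ k) {b y : ℝ} (hb : 0 < b) (hy : b < y)
    (f : Polynomial ℝ) (hdeg : f.natDegree ≤ k) {Mv : ℝ}
    (hM : ∀ x ∈ Set.Icc (0:ℝ) b, |f.eval x| ≤ Mv) :
    |f.eval y| ≤ Mv * (Polynomial.Chebyshev.T ℝ (k:ℤ)).eval (2*y/b - 1) := by
  have hkR : (0:ℝ) < k := by exact_mod_cast hk
  have hπ := Real.pi_pos
  set v : Fin (k+1) → ℝ := fun j => b*(1 + Real.cos ((j:ℕ)*π/k))/2 with hv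
  have hmem : ∀ j : Fin (k+1), v j ∈ Set.Icc (0:ℝ) b := by
    intro j
    have h1 := Real.neg_one_le_cos ((j:ℕ)*π/k)
    have h2 := Real.cos_le_one ((j:ℕ)*π/k)
    constructor
    · rw [hv]; dsimp only; nlinarith
    · rw [hv]; dsimp only; nlinarith
  have hanti : ∀ i j : Fin (k+1), i < j → v j < v i := by
    intro i j hij
    have hijn : ((i:ℕ):ℝ) < ((j:ℕ):ℝ) := by exact_mod_cast hij
    have hjk : ((j:ℕ):ℝ) ≤ (k:ℝ) := by exact_mod_cast Fin.is_le j
    have hθi0 : 0 ≤ (i:ℕ)*π/k := by positivity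
    have hθjπ : (j:ℕ)*π/k ≤ π := by
      rw [div_le_iff₀ hkR]; nlinarith
    have hθij : (i:ℕ)*π/k < (j:ℕ)*π/k := by
      apply div_lt_div_of_pos_right ?_ hkR
      · nlinarith
    have hcos := Real.cos_lt_cos_of_nonneg_of_le_pi hθi0 hθjπ hθij
    rw [hv]; dsimp only; nlinarith
  have hinj : Set.InjOn v (Finset.univ : Finset (Fin (k+1))) := by
    intro i _ j _ hij
    by_contra hne
    rcases Ne.lt_or_gt hne with h | h
    · exact absurd hij (ne_of_gt (hanti i j h))
    · exact absurd hij (ne_of_lt (hanti j i h))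
  have hvy : ∀ j : Fin (k+1), v j < y := fun j => lt_of_le_of_lt (hmem j).2 hy
  set ℓ : Fin (k+1) → ℝ := fun j => (Lagrange.basis Finset.univ v j).eval y with hℓ
  have hbasis : ∀ j : Fin (k+1), ℓ j = ∏ i ∈ Finset.univ.erase j, ((v j - v i)⁻¹ * (y - v i)) := by
    intro j
    rw [hℓ]; dsimp only
    rw [Lagrange.basis, Polynomial.eval_prod]
    exact Finset.prod_congr rfl fun i _ => by simp [Lagrange.basisDivisor]
  have hsign : ∀ j : Fin (k+1), |ℓ j| = (-1)^(j:ℕ) * ℓ j := by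
    intro j
    set F1 := (Finset.univ.erase j).filter (fun i => i < j) with hF1
    set F2 := (Finset.univ.erase j).filter (fun i => ¬ i < j) with hF2
    have hcard : F1.card = (j:ℕ) := by
      have h1 : F1 = Finset.Iio j := by
        ext i
        simp only [hF1, Finset.mem_filter, Finset.mem_erase, Finset.mem_univ, Finset.mem_Iio,
          true_and, and_iff_right_iff_imp]
        exact fun h => ⟨ne_of_lt h, trivial⟩
      rw [h1, Fin.card_Iio]
    have hneg : ∀ i ∈ F1, (v j - v i)⁻¹ * (y - v i) < 0 := by
      intro i hi
      rw [hF1, Finset.mem_filter] at hi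
      have h1 : v j < v i := hanti i j hi.2
      have h2 : 0 < y - v i := by linarith [hvy i]
      have h3 : (v j - v i)⁻¹ < 0 := inv_lt_zero.2 (by linarith)
      nlinarith
    have hpos : ∀ i ∈ F2, 0 ≤ (v j - v i)⁻¹ * (y - v i) := by
      intro i hi
      rw [hF2, Finset.mem_filter, Finset.mem_erase] at hi
      have hij : j < i := by
        rcases lt_or_ge j i with h | h
        · exact h
        · exact absurd (lt_of_le_of_ne h hi.1.1) hi.2
      have h1 : v i < v j := hanti j i hij
      have h2 : 0 < y - v i := by linarith [hvy i]
      exact mul_nonneg (le_of_lt (inv_pos.2 (by linarith))) (le_of_lt h2)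
    have hsplit : ℓ j = (∏ i ∈ F1, ((v j - v i)⁻¹ * (y - v i))) *
        (∏ i ∈ F2, ((v j - v i)⁻¹ * (y - v i))) := by
      rw [hbasis j, hF1, hF2]
      exact (Finset.prod_filter_mul_prod_filter_not _ _ _).symm
    have hprodF1 : (∏ i ∈ F1, ((v j - v i)⁻¹ * (y - v i))) =
        (-1)^(j:ℕ) * ∏ i ∈ F1, (-((v j - v i)⁻¹ * (y - v i))) := by
      rw [prod_neg_aux, hcard, ← mul_assoc, ← mul_pow]
      norm_num
    have hnn : 0 ≤ (-1:ℝ)^(j:ℕ) * ℓ j := by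
      rw [hsplit, hprodF1]
      have e1 : 0 ≤ ∏ i ∈ F1, (-((v j - v i)⁻¹ * (y - v i))) :=
        Finset.prod_nonneg fun i hi => by linarith [hneg i hi]
      have e2 : 0 ≤ ∏ i ∈ F2, ((v j - v i)⁻¹ * (y - v i)) :=
        Finset.prod_nonneg hpos
      have e3 : ((-1:ℝ))^(j:ℕ) * ((-1)^(j:ℕ) *
          (∏ i ∈ F1, (-((v j - v i)⁻¹ * (y - v i)))) *
          (∏ i ∈ F2, ((v j - v i)⁻¹ * (y - v i)))) =
          ((-1)^(j:ℕ))^2 * ((∏ i ∈ F1, (-((v j - v i)⁻¹ * (y - v i)))) *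
          (∏ i ∈ F2, ((v j - v i)⁻¹ * (y - v i)))) := by ring
      rw [e3]
      have : ((-1:ℝ)^(j:ℕ))^2 = 1 := by
        rw [← pow_mul, mul_comm, pow_mul]
        norm_num
      rw [this, one_mul]
      exact mul_nonneg e1 e2
    have habs : |ℓ j| = |(-1)^(j:ℕ) * ℓ j| := by
      rw [abs_mul, abs_pow, abs_neg, abs_one, one_pow, one_mul]
    rw [habs, abs_of_nonneg hnn]
  have hcards : (Finset.univ : Finset (Fin (k+1))).card = k + 1 := by
    rw [Finset.card_univ, Fintype.card_fin]
  have hdegzone : ∀ g : Polynomial ℝ, g.natDegree ≤ k →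
      g.degree < ((Finset.univ : Finset (Fin (k+1))).card : WithBot ℕ) := by
    intro g hg
    refine lt_of_le_of_lt (Polynomial.degree_le_natDegree) ?_
    rw [hcards]
    exact_mod_cast Nat.lt_succ_of_le hg
  have hfeq : f.eval y = ∑ j : Fin (k+1), f.eval (v j) * ℓ j := by
    conv_lhs => rw [Lagrange.eq_interpolate hinj (hdegzone f hdeg)]
    rw [Lagrange.interpolate_apply, Polynomial.eval_finset_sum]
    exact Finset.sum_congr rfl fun j _ => by rw [Polynomial.eval_mul, Polynomial.eval_C]
  set W : Polynomial ℝ :=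
    (Polynomial.Chebyshev.T ℝ (k:ℤ)).comp (Polynomial.C (2/b) * Polynomial.X - 1) with hW
  have hWdeg : W.natDegree ≤ k := by
    refine le_trans (Polynomial.natDegree_comp_le) ?_
    have h1 : (Polynomial.C (2/b) * Polynomial.X - 1 : Polynomial ℝ).natDegree ≤ 1 := by
      refine le_trans (Polynomial.natDegree_sub_le _ _) ?_
      simp only [max_le_iff]
      constructor
      · refine le_trans (Polynomial.natDegree_mul_le) ?_
        simp
      · simp
    have h2 := chebT_natDegree_le k
    calc (Polynomial.Chebyshev.T ℝ (k:ℤ)).natDegree *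
          (Polynomial.C (2/b) * Polynomial.X - 1 : Polynomial ℝ).natDegree
        ≤ k * 1 := Nat.mul_le_mul h2 h1
    _ = k := by ring
  have hWval : ∀ j : Fin (k+1), W.eval (v j) = (-1)^(j:ℕ) := by
    intro j
    rw [hW, Polynomial.eval_comp]
    have harg : Polynomial.eval (v j) (Polynomial.C (2/b) * Polynomial.X - 1)
        = Real.cos ((j:ℕ)*π/k) := by
      simp only [Polynomial.eval_sub, Polynomial.eval_mul, Polynomial.eval_C,
        Polynomial.eval_X, Polynomial.eval_one]
      rw [hv]; dsimp only
      field_simp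
      ring
    rw [harg, Polynomial.Chebyshev.T_real_cos]
    have harg2 : ((k:ℤ):ℝ) * ((j:ℕ)*π/k) = (j:ℕ)*π - 0 := by
      push_cast
      field_simp
      ring
    rw [harg2, Real.cos_nat_mul_pi_sub]
    simp
  have hWy : W.eval y = ∑ j : Fin (k+1), (-1)^(j:ℕ) * ℓ j := by
    conv_lhs => rw [Lagrange.eq_interpolate hinj (hdegzone W hWdeg)]
    rw [Lagrange.interpolate_apply, Polynomial.eval_finset_sum]
    exact Finset.sum_congr rfl fun j _ => by rw [Polynomial.eval_mul, Polynomial.eval_C, hWval j]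
  have hMv0 : 0 ≤ Mv :=
    le_trans (abs_nonneg _) (hM 0 ⟨le_refl 0, hb.le⟩)
  have hTW : W.eval y = (Polynomial.Chebyshev.T ℝ (k:ℤ)).eval (2*y/b - 1) := by
    rw [hW, Polynomial.eval_comp]
    congr 1
    simp only [Polynomial.eval_sub, Polynomial.eval_mul, Polynomial.eval_C,
      Polynomial.eval_X, Polynomial.eval_one]
    ring
  calc |f.eval y| = |∑ j : Fin (k+1), f.eval (v j) * ℓ j| := by rw [hfeq]
  _ ≤ ∑ j : Fin (k+1), |f.eval (v j) * ℓ j| := Finset.abs_sum_le_sum_abs _ _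
  _ ≤ ∑ j : Fin (k+1), Mv * |ℓ j| := by
      refine Finset.sum_le_sum fun j _ => ?_
      rw [abs_mul]
      exact mul_le_mul_of_nonneg_right (hM _ (hmem j)) (abs_nonneg _)
  _ = Mv * ∑ j : Fin (k+1), |ℓ j| := by rw [Finset.mul_sum]
  _ = Mv * ∑ j : Fin (k+1), (-1)^(j:ℕ) * ℓ j := by
      congr 1
      exact Finset.sum_congr rfl fun j _ => hsign j
  _ = Mv * W.eval y := by rw [hWy]
  _ = Mv * (Polynomial.Chebyshev.T ℝ (k:ℤ)).eval (2*y/b - 1) := by rw [hTW]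

set_option maxHeartbeats 2000000 in
theorem bMax_bounds (n : ℕ) (hn : 2 < n) :
    1 / (n : ℝ) + 1 / ((n : ℝ) ^ 2 * ((n : ℝ) - 1)) < bMax n ∧
      bMax n ≤ 4 * (n : ℝ) / (2 * (n : ℝ) - 1) ^ 2 := by
  have hn3 : (3:ℝ) ≤ (n:ℝ) := by exact_mod_cast hn
  set N : ℝ := (n:ℝ) with hN
  have hN0 : 0 < N := by linarith
  have hN1 : 1 < N := by linarith
  have hNm1 : 0 < N - 1 := by linarith
  set δ : ℝ := 17/(16*N*(N-1)) with hδ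
  have hδpos : 0 < δ := by rw [hδ]; positivity
  have hδ1 : δ ≤ 1 := by
    rw [hδ, div_le_one (by positivity)]
    nlinarith
  set b₀ : ℝ := (1+δ)/N with hb₀
  have hb₀pos : 0 < b₀ := by rw [hb₀]; positivity
  have hb₀le1 : b₀ ≤ 1 := by
    rw [hb₀, div_le_one hN0]
    linarith
  set M : ℕ := n^2 - 2 with hM
  have h9 : 9 ≤ n^2 := by
    calc 9 = 3*3 := by norm_num
    _ ≤ n*n := Nat.mul_le_mul (by omega) (by omega)
    _ = n^2 := (sq n).symm
  have hMcast : (M:ℝ) = N^2 - 2 := by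
    rw [hM, hN]
    push_cast [Nat.cast_sub (by omega : 2 ≤ n^2)]
    ring
  have hM7 : 7 ≤ M := by rw [hM]; omega
  have h34 : 0 ≤ (N-3)*(N-4) := by
    rcases Nat.lt_or_ge n 4 with h4 | h4
    · have hn3' : n = 3 := by omega
      rw [hN, hn3']
      norm_num
    · have : (4:ℝ) ≤ N := by rw [hN]; exact_mod_cast h4
      nlinarith
  have hδM : (M:ℝ)*δ ≤ 119/96 := by
    rw [hMcast, hδ, mul_div_assoc']
    rw [div_le_div_iff₀ (by positivity) (by norm_num)]
    nlinarith
  -- the polynomial Q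
  set q2 : Polynomial ℤ := Polynomial.X^2 + (Polynomial.C (-(n:ℤ)) * Polynomial.X + Polynomial.C 1)
    with hq2
  have hlindeg : (Polynomial.C (-(n:ℤ)) * Polynomial.X + Polynomial.C 1).degree
      < ((2:ℕ) : WithBot ℕ) :=
    lt_of_le_of_lt Polynomial.degree_linear_le (by exact_mod_cast one_lt_two)
  have hq2m : q2.Monic := by
    rw [hq2]
    exact Polynomial.monic_X_pow_add hlindeg
  have hq2d : q2.natDegree = 2 := by
    have hdeg : q2.degree = ((2:ℕ) : WithBot ℕ) := by
      rw [hq2]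
      rw [Polynomial.degree_add_eq_left_of_degree_lt (by rwa [Polynomial.degree_X_pow])]
      exact Polynomial.degree_X_pow 2
    exact Polynomial.natDegree_eq_of_degree_eq_some hdeg
  set Q : Polynomial ℤ := Polynomial.X^M * q2 with hQ
  have hQm : Q.Monic := (Polynomial.monic_X_pow M).mul hq2m
  have hQd : Q.natDegree = M + 2 := by
    rw [hQ, Polynomial.Monic.natDegree_mul (Polynomial.monic_X_pow M) hq2m,
      Polynomial.natDegree_X_pow, hq2d]
  have heval : ∀ x : ℝ, Polynomial.aeval x Q = x^M * (x^2 - N*x + 1) := by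
    intro x
    rw [hQ, hq2, hN]
    simp only [map_add, map_mul, map_pow, Polynomial.aeval_X, Polynomial.aeval_C, map_one]
    push_cast
    ring
  have hQsmall : supAbs b₀ Q ≤ (N⁻¹)^(M+2) := by
    refine supAbs_le hb₀pos.le fun x hx => ?_
    rw [heval x]
    have ht0 : 0 ≤ N*x := mul_nonneg hN0.le hx.1
    have ht : N*x ≤ 1 + δ := by
      have : x ≤ b₀ := hx.2
      rw [hb₀] at this
      calc N*x ≤ N*((1+δ)/N) := mul_le_mul_of_nonneg_left this hN0.le
      _ = 1 + δ := by field_simp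
    have hcore := core_ineq hM7 hδpos.le hδ1 hδM ht0 ht
    have heq : N^(M+2) * (x^M*(x^2 - N*x + 1)) = (N*x)^M * ((N*x)^2 + ((M:ℝ)+2)*(1-N*x)) := by
      rw [hMcast]
      ring
    have habs : |x^M*(x^2 - N*x + 1)| * N^(M+2) ≤ 1 := by
      calc |x^M*(x^2 - N*x + 1)| * N^(M+2)
          = |N^(M+2) * (x^M*(x^2 - N*x + 1))| := by
            rw [abs_mul (N^(M+2)) (x^M*(x^2 - N*x + 1)), abs_of_pos (pow_pos hN0 (M+2))]
            ring
      _ = |(N*x)^M * ((N*x)^2 + ((M:ℝ)+2)*(1-N*x))| := by rw [heq]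
      _ ≤ 1 := hcore
    rw [inv_pow, inv_eq_one_div, le_div_iff₀ (pow_pos hN0 _)]
    linarith [habs]
  have hdiam₀ : monicIntTransDiam (Set.Icc 0 b₀) = 1/N := by
    rw [monicIntTransDiam_eq]
    apply le_antisymm
    · have := limsup_sInf_le_of_small_poly hb₀pos hb₀le1 (le_of_lt hn) hQm
        (by rw [hQd]; omega) (by rw [hQd]; exact_mod_cast hQsmall)
      rw [one_div]
      exact this
    · have hmem : ((n:ℝ))⁻¹ ≤ b₀ := by
        rw [hb₀, ← hN, inv_eq_one_div]
        rw [div_le_div_iff₀ hN0 hN0]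
        nlinarith
      have := limsup_sInf_ge hb₀pos.le (le_of_lt hn) hmem
      rw [one_div]
      exact this
  have hb₀mem : b₀ ∈ {b : ℝ | 1 / (n : ℝ) < b ∧ monicIntTransDiam (Set.Icc 0 b) = 1 / (n : ℝ)} := by
    constructor
    · rw [← hN, hb₀, div_lt_div_iff₀ hN0 hN0]
      nlinarith
    · rw [← hN]
      exact hdiam₀
  -- upper bound for every member
  have hcastn1 : ((n-1:ℕ):ℝ) = N - 1 := by
    rw [hN]
    push_cast [Nat.cast_sub (by omega : 1 ≤ n)]
    ring
  have hq1 : 2 ≤ n - 1 := by omega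
  have hub : ∀ b ∈ {b : ℝ | 1 / (n : ℝ) < b ∧ monicIntTransDiam (Set.Icc 0 b) = 1 / (n : ℝ)},
      b ≤ 4*N/(2*N-1)^2 := by
    rintro b ⟨hb1n, hbdiam⟩
    rw [← hN] at hb1n hbdiam
    rw [monicIntTransDiam_eq] at hbdiam
    by_contra hnb
    push_neg at hnb
    have hbpos : 0 < b := lt_trans (by positivity) hb1n
    rcases le_or_gt (1/(N-1)) b with hcase | hcase
    · have hge := limsup_sInf_ge hbpos.le hq1 (by rw [hcastn1, inv_eq_one_div]; exact hcase)
      rw [hbdiam, hcastn1] at hge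
      have : 1/N < (N-1)⁻¹ := by
        rw [inv_eq_one_div, div_lt_div_iff₀ hN0 hNm1]
        linarith
      linarith
    · set y : ℝ := 1/(N-1) with hy
      have hby : b < y := hcase
      set z : ℝ := 2*y/b - 1 with hz
      have hz1 : 1 < z := by
        rw [hz]
        have h2y : 2 < 2*y/b := by
          rw [lt_div_iff₀ hbpos]
          linarith
        linarith
      set w : ℝ := Real.sqrt (z^2-1) with hw
      have hw0 : 0 ≤ w := Real.sqrt_nonneg _
      have hw2 : w^2 = z^2-1 := Real.sq_sqrt (by nlinarith)
      set g : ℝ := z + w with hg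
      have hgpos : 0 < g := by rw [hg]; linarith
      -- fraction-free facts
      set B : ℝ := (N-1)*b with hB
      have hBpos : 0 < B := by rw [hB]; positivity
      have hPz : B * z = 2 - B := by
        rw [hB, hz, hy]
        field_simp
      have hBU : 4*N*(N-1) < B*(2*N-1)^2 := by
        rw [hB]
        have h4N : 4*N < b*(2*N-1)^2 := by
          rw [← div_lt_iff₀ (by nlinarith : (0:ℝ) < (2*N-1)^2)]
          exact hnb
        nlinarith
      have hR : 0 < N - (N-1)*z := by
        have hRB : (N - (N-1)*z)*B = (2*N-1)*B - 2*(N-1) := by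
          have : (N-1)*(B*z) = (N-1)*(2-B) := by rw [hPz]
          nlinarith [this]
        have h2 : 0 < (2*N-1)*B - 2*(N-1) := by nlinarith
        nlinarith
      have hsq : ((N-1)*w)^2 < (N - (N-1)*z)^2 := by
        have hexp : (N - (N-1)*z)^2 - ((N-1)*w)^2
            = N^2 + (N-1)^2 - 2*N*(N-1)*z := by
          linear_combination (-((N-1)^2)) * hw2
        have h3 : (N^2 + (N-1)^2 - 2*N*(N-1)*z)*B = (2*N-1)^2*B - 4*N*(N-1) := by
          have : 2*N*(N-1)*(B*z) = 2*N*(N-1)*(2-B) := by rw [hPz]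
          nlinarith [this]
        nlinarith
      have hfin : (N-1)*w < N - (N-1)*z :=
        lt_of_pow_lt_pow_left₀ 2 hR.le hsq
      have hNg : (N-1)*g < N := by rw [hg]; nlinarith
      have hperk : ∀ k, 1 ≤ k → ((N-1)*g)⁻¹ ≤ sInf (Sset b k) := by
        intro k hk
        refine le_csInf (Sset_nonempty b k) ?_
        rintro y' ⟨p, hpm, hpd, rfl⟩
        set f : Polynomial ℝ := p.map (Int.castRingHom ℝ) with hf
        have hfd : f.natDegree = k := by rw [hf, hpm.natDegree_map, hpd]
        have hfeval : ∀ x : ℝ, f.eval x = Polynomial.aeval x p := by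
          intro x
          rw [hf, Polynomial.eval_map, Polynomial.aeval_def]
          norm_num
        have hMb : ∀ x ∈ Set.Icc (0:ℝ) b, |f.eval x| ≤ supAbs b p := fun x hx => by
          rw [hfeval]; exact le_supAbs hx p
        have hcheb := cheb_compare hk hbpos hby f (le_of_eq hfd) hMb
        rw [← hz] at hcheb
        have hTle := chebT_eval_le hz1.le k
        have hip := int_point p hpm (by rw [hpd]; exact hk) (n-1) hq1
        rw [hpd, hcastn1] at hip
        have hyeq : (N-1)⁻¹ = y := by rw [hy, inv_eq_one_div]
        have hlow : ((N-1))⁻¹^k ≤ |f.eval y| := by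
          rw [hfeval, ← hyeq]
          exact hip
        have hsup2 : (((N-1)*g)⁻¹)^k ≤ supAbs b p := by
          have h1 : ((N-1))⁻¹^k ≤ supAbs b p * g^k := by
            calc ((N-1))⁻¹^k ≤ |f.eval y| := hlow
            _ ≤ supAbs b p * (Polynomial.Chebyshev.T ℝ (k:ℤ)).eval z := hcheb
            _ ≤ supAbs b p * g^k :=
                mul_le_mul_of_nonneg_left hTle (supAbs_nonneg hbpos.le p)
          have hgk : 0 < g^k := pow_pos hgpos k
          rw [mul_inv, mul_pow, inv_pow g k]
          rw [← div_le_iff₀ hgk] at h1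
          rw [div_eq_mul_inv] at h1
          exact h1
        calc ((N-1)*g)⁻¹ = ((((N-1)*g)⁻¹)^k) ^ ((1:ℝ)/k) :=
              (pow_rpow_inv' (by positivity) (by omega)).symm
        _ ≤ (supAbs b p) ^ ((1:ℝ)/k) :=
            Real.rpow_le_rpow (by positivity) hsup2 (by positivity)
      have hlim : ((N-1)*g)⁻¹ ≤ limsup (fun k => sInf (Sset b k)) atTop := by
        refine Filter.le_limsup_of_frequently_le (Filter.Eventually.frequently ?_)
          (isBoundedUnder_sInf hbpos.le)
        filter_upwards [Filter.eventually_ge_atTop 1] with k hk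
        exact hperk k hk
      rw [hbdiam] at hlim
      have h2 : 1/N < ((N-1)*g)⁻¹ := by
        rw [inv_eq_one_div, div_lt_div_iff₀ hN0 (by positivity)]
        nlinarith
      linarith
  have hbdd : BddAbove {b : ℝ | 1 / (n : ℝ) < b ∧
      monicIntTransDiam (Set.Icc 0 b) = 1 / (n : ℝ)} := ⟨4*N/(2*N-1)^2, hub⟩
  constructor
  · have hlt : 1/N + 1/(N^2*(N-1)) < b₀ := by
      have e : b₀ = 1/N + 17/(16*(N^2*(N-1))) := by
        rw [hb₀, hδ]
        field_simp
      rw [e]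
      have : 1/(N^2*(N-1)) < 17/(16*(N^2*(N-1))) := by
        rw [div_lt_div_iff₀ (by positivity) (by positivity)]
        nlinarith [sq_nonneg N]
      linarith
    calc 1/N + 1/(N^2*(N-1)) < b₀ := hlt
    _ ≤ bMax n := le_csSup hbdd hb₀mem
  · exact csSup_le ⟨b₀, hb₀mem⟩ hub
end
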